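/- arXiv:1904.10201 — 5 statements merged into one kernel-verified Lean document; each statement's English description precedes it below -/
import Mathlib

section
/- Let N be an odd positive integer. The map Φ₄ sending a pair of matrices (M₁, M₂) = ([[a₁,b₁],[c₁,d₁]], [[a₂,b₂],[c₂,d₂]]) in SL₂(ℤ)×SL₂(ℤ) with M₁ ≡ M₂ (mod 2) to the 4×4 matrix [[a₁, 0, 2b₁, b₁], [(a₁−a₂)/2, a₂, b₁, (b₂+Nb₁)/(2N)], [(c₁+Nc₂)/2, −Nc₂, d₁, (d₁−d₂)/2], [−Nc₂, 2Nc₂, 0, d₂]] is a group homomorphism into Sp₄(ℚ), and its image lies in the paramodular group K(N). -/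
open Matrix

/-- The standard symplectic matrix `J` over ℚ. -/
def Jmat : Matrix (Fin 4) (Fin 4) ℚ :=
  !![0,0,1,0; 0,0,0,1; -1,0,0,0; 0,-1,0,0]

/-- `σ_N = diag(1,1,1,N)`. -/
def sigmaN (N : ℕ) : Matrix (Fin 4) (Fin 4) ℚ :=
  !![1,0,0,0; 0,1,0,0; 0,0,1,0; 0,0,0,(N : ℚ)]

/-- Membership in the paramodular group `K(N)` for a rational 4×4 matrix:
symplectic, and integral after conjugation by `σ_N`. -/
def memK (N : ℕ) (M : Matrix (Fin 4) (Fin 4) ℚ) : Prop :=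
  Mᵀ * Jmat * M = Jmat ∧ ∀ i j, ∃ z : ℤ, ((sigmaN N)⁻¹ * M * sigmaN N) i j = (z : ℚ)

/-- The embedding `Φ₄` of pairs of `SL₂(ℤ)` matrices congruent mod 2. -/
def Phi4 (N : ℕ) (M₁ M₂ : Matrix (Fin 2) (Fin 2) ℤ) : Matrix (Fin 4) (Fin 4) ℚ :=
  !![(M₁ 0 0 : ℚ), 0, 2 * M₁ 0 1, (M₁ 0 1 : ℚ);
     ((M₁ 0 0 : ℚ) - M₂ 0 0) / 2, (M₂ 0 0 : ℚ), (M₁ 0 1 : ℚ),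
       ((M₂ 0 1 : ℚ) + N * M₁ 0 1) / (2 * N);
     ((M₁ 1 0 : ℚ) + N * M₂ 1 0) / 2, -(N : ℚ) * M₂ 1 0, (M₁ 1 1 : ℚ),
       ((M₁ 1 1 : ℚ) - M₂ 1 1) / 2;
     -(N : ℚ) * M₂ 1 0, 2 * N * M₂ 1 0, 0, (M₂ 1 1 : ℚ)]

set_option maxHeartbeats 1600000 in
/-- Scalar-level form of the symplectic condition. -/
lemma Phi4_symplectic_aux (n a1 b1 c1 d1 a2 b2 c2 d2 : ℚ) (hn : n ≠ 0)
    (e1 : a1 * d1 - b1 * c1 = 1) (e2 : a2 * d2 - b2 * c2 = 1) :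
    (!![a1, 0, 2*b1, b1;
        (a1 - a2)/2, a2, b1, (b2 + n*b1)/(2*n);
        (c1 + n*c2)/2, -n*c2, d1, (d1 - d2)/2;
        -n*c2, 2*n*c2, 0, d2])ᵀ * Jmat *
      !![a1, 0, 2*b1, b1;
        (a1 - a2)/2, a2, b1, (b2 + n*b1)/(2*n);
        (c1 + n*c2)/2, -n*c2, d1, (d1 - d2)/2;
        -n*c2, 2*n*c2, 0, d2] = Jmat := by
  have hT : (!![a1, 0, 2*b1, b1;
        (a1 - a2)/2, a2, b1, (b2 + n*b1)/(2*n);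
        (c1 + n*c2)/2, -n*c2, d1, (d1 - d2)/2;
        -n*c2, 2*n*c2, 0, d2])ᵀ =
      !![a1, (a1 - a2)/2, (c1 + n*c2)/2, -n*c2;
         0, a2, -n*c2, 2*n*c2;
         2*b1, b1, d1, 0;
         b1, (b2 + n*b1)/(2*n), (d1 - d2)/2, d2] := by
    ext i j; fin_cases i <;> fin_cases j <;> rfl
  rw [hT]
  ext i j
  fin_cases i <;> fin_cases j <;>
    simp [Jmat, Matrix.mul_apply, Fin.sum_univ_four, Matrix.vecHead, Matrix.vecTail] <;>
    first
      | ring1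
      | linear_combination (norm := ((try field_simp); ring1)) e1
      | linear_combination (norm := ((try field_simp); ring1)) (-e1)
      | linear_combination (norm := ((try field_simp); ring1)) e2
      | linear_combination (norm := ((try field_simp); ring1)) (-e2)
      | linear_combination (norm := ((try field_simp); ring1)) ((e1-e2)/2)
      | linear_combination (norm := ((try field_simp); ring1)) ((e2-e1)/2)

set_option maxHeartbeats 1600000 in
/-- Scalar-level form of the integrality condition. -/
lemma Phi4_integral_aux (N m : ℕ) (a1 b1 c1 d1 a2 b2 c2 d2 kA kB kC kD : ℤ)
    (hm : N = 2*m+1)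
    (hA : a2 - a1 = 2*kA) (hB : b2 - b1 = 2*kB) (hC : c2 - c1 = 2*kC) (hD : d2 - d1 = 2*kD) :
    ∀ i j, ∃ z : ℤ, ((sigmaN N)⁻¹ *
      !![(a1 : ℚ), 0, 2 * b1, (b1 : ℚ);
         ((a1 : ℚ) - a2) / 2, (a2 : ℚ), (b1 : ℚ), ((b2 : ℚ) + N * b1) / (2 * N);
         ((c1 : ℚ) + N * c2) / 2, -(N : ℚ) * c2, (d1 : ℚ), ((d1 : ℚ) - d2) / 2;
         -(N : ℚ) * c2, 2 * N * c2, 0, (d2 : ℚ)] * sigmaN N) i j = (z : ℚ) := by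
  have hN0 : (N:ℚ) ≠ 0 := by
    have : 0 < N := by omega
    exact Nat.cast_ne_zero.mpr this.ne'
  have hmQ : (N:ℚ) = 2*(m:ℚ)+1 := by exact_mod_cast congrArg (Nat.cast : ℕ → ℚ) hm
  have hAQ : (a2:ℚ) - a1 = 2*kA := by exact_mod_cast congrArg (Int.cast : ℤ → ℚ) hA
  have hBQ : (b2:ℚ) - b1 = 2*kB := by exact_mod_cast congrArg (Int.cast : ℤ → ℚ) hB
  have hCQ : (c2:ℚ) - c1 = 2*kC := by exact_mod_cast congrArg (Int.cast : ℤ → ℚ) hC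
  have hDQ : (d2:ℚ) - d1 = 2*kD := by exact_mod_cast congrArg (Int.cast : ℤ → ℚ) hD
  have hinv : (sigmaN N)⁻¹ = !![1,0,0,0; 0,1,0,0; 0,0,1,0; 0,0,0,((N:ℚ))⁻¹] := by
    apply Matrix.inv_eq_right_inv
    ext a b
    fin_cases a <;> fin_cases b <;>
      simp [sigmaN, Matrix.mul_apply, Fin.sum_univ_four, Matrix.vecHead, Matrix.vecTail,
        Matrix.one_apply] <;> field_simp
  intro i j
  rw [hinv]
  fin_cases i <;> fin_cases j <;>
    simp [sigmaN, Matrix.mul_apply, Fin.sum_univ_four, Matrix.vecHead, Matrix.vecTail] <;>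
    first
    | (refine ⟨0, ?_⟩; norm_num; done)
    | (refine ⟨2*b1, ?_⟩; push_cast; ring1)
    | (refine ⟨b1*N, ?_⟩; push_cast; ring1)
    | (refine ⟨-kA, ?_⟩; push_cast; linear_combination -hAQ/2)
    | (refine ⟨kB + (m+1)*b1, ?_⟩; push_cast;
        linear_combination (norm := (field_simp; ring1)) (hBQ/2 + (b1:ℚ)/2*hmQ))
    | (refine ⟨-kC + (m+1)*c2, ?_⟩; push_cast; linear_combination (-hCQ/2 + (c2:ℚ)/2*hmQ))
    | (refine ⟨-(N:ℤ)*c2, ?_⟩; push_cast; ring1)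
    | (refine ⟨-kD*N, ?_⟩; push_cast; linear_combination (-(N:ℚ)/2*hDQ))
    | (refine ⟨-c2, ?_⟩; push_cast; field_simp <;> ring1)
    | (refine ⟨2*c2, ?_⟩; push_cast; field_simp <;> ring1)
    | (refine ⟨d2, ?_⟩; push_cast; field_simp <;> ring1)

set_option maxHeartbeats 1600000 in
theorem Phi4_hom_into_KN (N : ℕ) (hN : Odd N) (hNpos : 0 < N) :
    -- Φ₄ is multiplicative on pairs congruent mod 2
    (∀ M₁ M₂ M₁' M₂' : Matrix (Fin 2) (Fin 2) ℤ,
      M₁.det = 1 → M₂.det = 1 → M₁'.det = 1 → M₂'.det = 1 →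
      (∀ i j, M₁ i j ≡ M₂ i j [ZMOD 2]) → (∀ i j, M₁' i j ≡ M₂' i j [ZMOD 2]) →
      Phi4 N (M₁ * M₁') (M₂ * M₂') = Phi4 N M₁ M₂ * Phi4 N M₁' M₂') ∧
    -- the image lies in the paramodular group K(N) (in particular in Sp₄(ℚ))
    (∀ M₁ M₂ : Matrix (Fin 2) (Fin 2) ℤ,
      M₁.det = 1 → M₂.det = 1 → (∀ i j, M₁ i j ≡ M₂ i j [ZMOD 2]) →
      memK N (Phi4 N M₁ M₂)) := by
  have hN0 : (N:ℚ) ≠ 0 := Nat.cast_ne_zero.mpr hNpos.ne'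
  constructor
  · intro M₁ M₂ M₁' M₂' _ _ _ _ _ _
    rw [Matrix.eta_fin_two M₁, Matrix.eta_fin_two M₂, Matrix.eta_fin_two M₁',
      Matrix.eta_fin_two M₂']
    simp only [Matrix.mul_fin_two, Phi4, Matrix.cons_val', Matrix.cons_val_zero,
      Matrix.cons_val_one, Matrix.head_cons, Matrix.head_fin_const, Matrix.empty_val',
      Matrix.cons_val_fin_one]
    ext i j
    fin_cases i <;> fin_cases j <;>
      simp [Matrix.mul_apply, Fin.sum_univ_four] <;>
      (try field_simp) <;> ring
  · intro M₁ M₂ h1 h2 hc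
    constructor
    · rw [Matrix.det_fin_two] at h1 h2
      have e1 : (M₁ 0 0 : ℚ) * M₁ 1 1 - M₁ 0 1 * M₁ 1 0 = 1 := by
        exact_mod_cast congrArg (Int.cast : ℤ → ℚ) h1
      have e2 : (M₂ 0 0 : ℚ) * M₂ 1 1 - M₂ 0 1 * M₂ 1 0 = 1 := by
        exact_mod_cast congrArg (Int.cast : ℤ → ℚ) h2
      exact Phi4_symplectic_aux (N:ℚ) (M₁ 0 0) (M₁ 0 1) (M₁ 1 0) (M₁ 1 1)
        (M₂ 0 0) (M₂ 0 1) (M₂ 1 0) (M₂ 1 1) hN0 e1 e2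
    · obtain ⟨m, hm⟩ := hN
      have hm' : N = 2*m+1 := by omega
      obtain ⟨kA, hkA⟩ := (hc 0 0).dvd
      obtain ⟨kB, hkB⟩ := (hc 0 1).dvd
      obtain ⟨kC, hkC⟩ := (hc 1 0).dvd
      obtain ⟨kD, hkD⟩ := (hc 1 1).dvd
      exact Phi4_integral_aux N m (M₁ 0 0) (M₁ 0 1) (M₁ 1 0) (M₁ 1 1)
        (M₂ 0 0) (M₂ 0 1) (M₂ 1 0) (M₂ 1 1) kA kB kC kD hm' hkA hkB hkC hkD
end

section
/- Let A = ℂ[x,y,z] be a polynomial ring graded with deg x = 2, deg y = 4, deg z = 6. The subalgebra B of A generated by x² − 48y, x³ − 72xy, z, xz, yz has Hilbert series Σ_k dim(B_k) t^k = (1 + t⁸ + t¹⁰)/((1−t⁴)(1−t⁶)²). -/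
open MvPolynomial

/-- Weights: `deg x = 2`, `deg y = 4`, `deg z = 6`. -/
def wts : Fin 3 → ℕ := ![2, 4, 6]

noncomputable def xP : MvPolynomial (Fin 3) ℂ := X 0
noncomputable def yP : MvPolynomial (Fin 3) ℂ := X 1
noncomputable def zP : MvPolynomial (Fin 3) ℂ := X 2

/-- The subalgebra generated by `x² − 48y`, `x³ − 72xy`, `z`, `xz`, `yz`. -/
noncomputable def B : Subalgebra ℂ (MvPolynomial (Fin 3) ℂ) :=
  Algebra.adjoin ℂ {xP ^ 2 - 48 * yP, xP ^ 3 - 72 * xP * yP, zP, xP * zP, yP * zP}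

/-- The `k`-th graded piece of `B` with respect to the weighted grading. -/
noncomputable def Bk (k : ℕ) : Submodule ℂ (MvPolynomial (Fin 3) ℂ) :=
  Subalgebra.toSubmodule B ⊓ weightedHomogeneousSubmodule ℂ wts k


/-!
Put `v = x² − 48y` and `c = x³ − 72xy`. Then `48y = x² − v` and `x³ = 3xv − 2c`, so the
products `xⁱ vʲ cᵐ zᵏ` with `i < 3` span `ℂ[x,y,z]`, and by the same relation `B` is spanned by
those with `i = 0` or `k ≥ 1`, that is `B = P + xz P + x²z P` for `P = ℂ[v,c,z]`. In each degree
the first family has as many members as there are monomials, since both generating functions are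
the inverse of `(1−t²)(1−t⁴)(1−t⁶)` (note `(1+t²+t⁴)(1−t²) = 1−t⁶`); hence it is a basis, and
counting the second family gives `(1 + t⁸ + t¹⁰)/((1−t⁴)(1−t⁶)²)`.
-/

open Finset.HasAntidiagonal

/-- An infinite fibre contributes `Nat.card = 0`, hence the finiteness hypotheses below. -/
noncomputable def cardSeries {α : Type*} (deg : α → ℕ) : PowerSeries ℤ :=
  PowerSeries.mk fun n => Nat.card (deg ⁻¹' {n})

section CardSeries

variable {α β : Type*}

theorem cardSeries_congr {dα : α → ℕ} {dβ : β → ℕ} (e : α ≃ β)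
    (h : ∀ a, dβ (e a) = dα a) : cardSeries dβ = cardSeries dα := by
  ext n
  simp only [cardSeries, PowerSeries.coeff_mk, Nat.cast_inj]
  exact Nat.card_congr (e.subtypeEquiv fun a => by simp [h]).symm

theorem cardSeries_fintype [Fintype α] (d : α → ℕ) :
    cardSeries d = ∑ a, PowerSeries.X ^ d a := by
  classical
  ext n
  simp only [cardSeries, PowerSeries.coeff_mk, map_sum, PowerSeries.coeff_X_pow,
    Nat.card_eq_fintype_card, Fintype.card_subtype, Set.mem_preimage, Set.mem_singleton_iff,
    Finset.sum_boole]
  simp [eq_comm]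

def fiberAddEquiv (d₁ : α → ℕ) (d₂ : β → ℕ) (n : ℕ) :
    (fun p : α × β => d₁ p.1 + d₂ p.2) ⁻¹' {n} ≃
      Σ q : antidiagonal n, (d₁ ⁻¹' {q.1.1}) × (d₂ ⁻¹' {q.1.2}) where
  toFun p :=
    ⟨⟨(d₁ p.1.1, d₂ p.1.2), mem_antidiagonal.2 p.2⟩, ⟨p.1.1, rfl⟩, ⟨p.1.2, rfl⟩⟩
  invFun q := ⟨(q.2.1, q.2.2), by
    rw [Set.mem_preimage, q.2.1.2, q.2.2.2]
    exact mem_antidiagonal.1 q.1.2⟩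
  left_inv _ := rfl
  right_inv := by
    rintro ⟨⟨⟨i, j⟩, hij⟩, ⟨a, rfl : d₁ a = i⟩, ⟨b, rfl : d₂ b = j⟩⟩
    rfl

section Prod

variable (d₁ : α → ℕ) (d₂ : β → ℕ) [∀ n, Finite (d₁ ⁻¹' {n})]
  [∀ n, Finite (d₂ ⁻¹' {n})]

theorem finite_fiber_add (n : ℕ) :
    Finite ((fun p : α × β => d₁ p.1 + d₂ p.2) ⁻¹' {n}) :=
  Finite.of_equiv _ (fiberAddEquiv d₁ d₂ n).symm

theorem cardSeries_prod :
    cardSeries (fun p : α × β => d₁ p.1 + d₂ p.2) = cardSeries d₁ * cardSeries d₂ := by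
  ext n
  rw [PowerSeries.coeff_mul, cardSeries, PowerSeries.coeff_mk,
    Nat.card_congr (fiberAddEquiv d₁ d₂ n), Nat.card_sigma]
  simp only [cardSeries, PowerSeries.coeff_mk, Nat.card_prod]
  push_cast
  exact Finset.sum_coe_sort (antidiagonal n) fun q =>
    (Nat.card (d₁ ⁻¹' {q.1}) * Nat.card (d₂ ⁻¹' {q.2}) : ℤ)

end Prod

variable (a : ℕ) [NeZero a]

theorem finite_fiber_mul_left (n : ℕ) : Finite ((a * ·) ⁻¹' {n}) :=
  Set.Subsingleton.finite (fun k (hk : a * k = n) l (hl : a * l = n) =>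
    Nat.eq_of_mul_eq_mul_left (Nat.pos_of_neZero a) (hk.trans hl.symm)) |>.to_subtype

theorem card_fiber_mul_left (n : ℕ) :
    Nat.card ((a * ·) ⁻¹' {n}) = if a ∣ n then 1 else 0 := by
  split_ifs with h
  · obtain ⟨k, rfl⟩ := h
    have : (a * ·) ⁻¹' {a * k} = {k} := by
      ext l
      simp [Nat.mul_left_cancel_iff (Nat.pos_of_neZero a)]
    rw [this, Nat.card_unique]
  · rw [Nat.card_eq_zero]
    exact .inl ⟨fun ⟨k, hk⟩ => h ⟨k, hk.symm⟩⟩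

theorem cardSeries_mul_left_mul_one_sub : cardSeries (a * ·) * (1 - PowerSeries.X ^ a) = 1 := by
  have ha := Nat.pos_of_neZero a
  ext n
  rw [mul_sub, mul_one, map_sub, PowerSeries.coeff_mul_X_pow', PowerSeries.coeff_one]
  simp only [cardSeries, PowerSeries.coeff_mk, card_fiber_mul_left]
  rcases Nat.eq_zero_or_pos n with rfl | hn
  · simp [Nat.not_le.2 ha]
  · by_cases han : a ≤ n
    · have : ¬a ∣ n → ¬n ≤ a := fun h h' => h (by rw [le_antisymm h' han])
      by_cases h : a ∣ n <;> simp [han, hn.ne', h, Nat.dvd_sub_self_right, this]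
    · simp [han, hn.ne', Nat.not_dvd_of_pos_of_lt hn (not_le.1 han)]

end CardSeries

section GradedPieces

variable {σ ι R M K : Type*} [CommSemiring R] [AddCommMonoid M] [Field K]

theorem finrank_weightedHomogeneousSubmodule (w : σ → M) (n : M) :
    Module.finrank K (weightedHomogeneousSubmodule K w n) =
      Nat.card {d : σ →₀ ℕ | Finsupp.weight w d = n} := by
  rw [weightedHomogeneousSubmodule_eq_finsupp_supported]
  exact Module.finrank_eq_nat_card_basis (basisRestrictSupport K _)

theorem span_range_inf_weightedHomogeneousSubmodule {w : σ → M} {f : ι → MvPolynomial σ R}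
    {deg : ι → M} (hf : ∀ i, (f i).IsWeightedHomogeneous w (deg i)) (n : M) :
    Submodule.span R (Set.range f) ⊓ weightedHomogeneousSubmodule R w n =
      Submodule.span R (Set.range fun i : deg ⁻¹' {n} => f i) := by
  classical
  apply le_antisymm
  · rintro p ⟨hp, hpn⟩
    rw [← weightedHomogeneousComponent_eq_self hpn]
    have := Submodule.mem_map_of_mem (f := weightedHomogeneousComponent w n) hp
    rw [Submodule.map_span, ← Set.range_comp] at this
    refine Submodule.span_le.2 ?_ this
    rintro _ ⟨i, rfl⟩
    by_cases hi : deg i = n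
    · subst hi
      rw [Function.comp_apply, (hf i).weightedHomogeneousComponent_same]
      exact Submodule.subset_span ⟨⟨i, rfl⟩, rfl⟩
    · rw [Function.comp_apply, (hf i).weightedHomogeneousComponent_ne n (Ne.symm hi)]
      exact zero_mem _
  · rw [Submodule.span_le]
    rintro _ ⟨⟨i, hi⟩, rfl⟩
    exact ⟨Submodule.subset_span ⟨i, rfl⟩, hi ▸ hf i⟩

variable {w : σ → M} {f : ι → MvPolynomial σ K} {deg : ι → M}
  (hf : ∀ i, (f i).IsWeightedHomogeneous w (deg i)) (n : M) [Finite (deg ⁻¹' {n})]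
include hf

theorem linearIndependent_fiber_of_span_eq_top (hspan : Submodule.span K (Set.range f) = ⊤)
    (hcard : Nat.card (deg ⁻¹' {n}) = Nat.card {d : σ →₀ ℕ | Finsupp.weight w d = n}) :
    LinearIndependent K fun i : deg ⁻¹' {n} => f i := by
  have := Fintype.ofFinite (deg ⁻¹' {n})
  rw [linearIndependent_iff_card_eq_finrank_span, Set.finrank,
    ← span_range_inf_weightedHomogeneousSubmodule hf, hspan, top_inf_eq,
    finrank_weightedHomogeneousSubmodule, ← hcard, Nat.card_eq_fintype_card]

theorem finrank_span_range_inf_weightedHomogeneousSubmodule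
    (hli : LinearIndependent K fun i : deg ⁻¹' {n} => f i) :
    Module.finrank K ↥(Submodule.span K (Set.range f) ⊓ weightedHomogeneousSubmodule K w n) =
      Nat.card (deg ⁻¹' {n}) := by
  have := Fintype.ofFinite (deg ⁻¹' {n})
  rw [span_range_inf_weightedHomogeneousSubmodule hf, finrank_span_eq_card hli,
    Nat.card_eq_fintype_card]

end GradedPieces

theorem Algebra.adjoin_le_span_range_of_mul_mem {R A ι : Type*} [CommSemiring R] [Semiring A]
    [Algebra R A] {s : Set A} {f : ι → A} (hs : s ⊆ Submodule.span R (Set.range f))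
    (h1 : 1 ∈ Submodule.span R (Set.range f))
    (hf : ∀ i j, f i * f j ∈ Submodule.span R (Set.range f)) :
    Subalgebra.toSubmodule (Algebra.adjoin R s) ≤ Submodule.span R (Set.range f) := by
  refine Algebra.adjoin_le (S := (Submodule.span R _).toSubalgebra h1 fun p q hp hq => ?_) hs
  have := Submodule.mul_mem_mul hp hq
  rw [Submodule.span_mul_span] at this
  refine Submodule.span_le.2 ?_ this
  rintro _ ⟨_, ⟨i, rfl⟩, _, ⟨j, rfl⟩, rfl⟩
  exact hf i j

noncomputable def vP : MvPolynomial (Fin 3) ℂ := xP ^ 2 - 48 * yP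
noncomputable def cP : MvPolynomial (Fin 3) ℂ := xP ^ 3 - 72 * xP * yP

noncomputable def xvcz (i j m k : ℕ) : MvPolynomial (Fin 3) ℂ :=
  xP ^ i * vP ^ j * cP ^ m * zP ^ k

theorem xvcz_mul (i j m k i' j' m' k' : ℕ) :
    xvcz i j m k * xvcz i' j' m' k' = xvcz (i + i') (j + j') (m + m') (k + k') := by
  simp only [xvcz, pow_add]
  ring

theorem xvcz_add_three (i j m k : ℕ) :
    xvcz (i + 3) j m k = 3 • xvcz (i + 1) (j + 1) m k - 2 • xvcz i j (m + 1) k := by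
  simp only [xvcz, vP, cP, nsmul_eq_mul]
  push_cast
  ring

theorem smul_yP_mul_zP_pow (k : ℕ) :
    (48 : ℂ) • (yP * zP ^ k) = xvcz 2 0 0 k - xvcz 0 1 0 k := by
  simp only [xvcz, vP, smul_eq_C_mul, map_ofNat]
  ring

theorem isWeightedHomogeneous_xvcz (i j m k : ℕ) :
    (xvcz i j m k).IsWeightedHomogeneous wts (2 * i + 4 * j + 6 * m + 6 * k) := by
  have hx : xP.IsWeightedHomogeneous wts 2 := isWeightedHomogeneous_X ℂ wts 0
  have hy : yP.IsWeightedHomogeneous wts 4 := isWeightedHomogeneous_X ℂ wts 1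
  have hz : zP.IsWeightedHomogeneous wts 6 := isWeightedHomogeneous_X ℂ wts 2
  have hv : vP.IsWeightedHomogeneous wts 4 :=
    (hx.pow 2).sub (by rw [← map_ofNat C 48]; exact hy.C_mul 48)
  have hc : cP.IsWeightedHomogeneous wts 6 :=
    (hx.pow 3).sub (by rw [← map_ofNat C 72, mul_assoc]; exact (hx.mul hy).C_mul 72)
  rw [xvcz]
  convert ((hx.pow i).mul (hv.pow j)).mul (hc.pow m) |>.mul (hz.pow k) using 1
  simp only [smul_eq_mul]
  ring

abbrev Exponent := Fin 3 × ℕ × ℕ × ℕ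

noncomputable def famA (p : Exponent) : MvPolynomial (Fin 3) ℂ :=
  xvcz p.1 p.2.1 p.2.2.1 p.2.2.2

def zShift (p : Exponent) : Exponent :=
  (p.1, p.2.1, p.2.2.1, p.2.2.2 + if p.1 = 0 then 0 else 1)

noncomputable def famB : Exponent → MvPolynomial (Fin 3) ℂ := famA ∘ zShift

def vczDeg (t : ℕ × ℕ × ℕ) : ℕ := 4 * t.1 + (6 * t.2.1 + 6 * t.2.2)

def degA (p : Exponent) : ℕ := 2 * (p.1 : ℕ) + vczDeg p.2

/-- `0, 8, 10` are the degrees of `1, xz, x²z`. -/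
def degB (p : Exponent) : ℕ := ![0, 8, 10] p.1 + vczDeg p.2

theorem isWeightedHomogeneous_famA (p : Exponent) :
    (famA p).IsWeightedHomogeneous wts (degA p) := by
  rw [famA]
  convert isWeightedHomogeneous_xvcz p.1 p.2.1 p.2.2.1 p.2.2.2 using 1
  simp only [degA, vczDeg]
  ring

theorem degA_zShift (p : Exponent) : degA (zShift p) = degB p := by
  obtain ⟨i, j, m, k⟩ := p
  fin_cases i <;> simp [degA, degB, zShift, vczDeg] <;> ring

theorem zShift_injective : Function.Injective zShift := by
  rintro ⟨i, j, m, k⟩ ⟨i', j', m', k'⟩ h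
  simp only [zShift, Prod.mk.injEq] at h
  obtain ⟨rfl, rfl, rfl, h⟩ := h
  simp_all

theorem isWeightedHomogeneous_famB (p : Exponent) :
    (famB p).IsWeightedHomogeneous wts (degB p) :=
  degA_zShift p ▸ isWeightedHomogeneous_famA (zShift p)

open Submodule in
theorem xvcz_mem_span_famA {i : ℕ} (hi : i ≤ 4) (j m k : ℕ) :
    xvcz i j m k ∈ span ℂ (Set.range famA) := by
  have base {i : ℕ} (hi : i < 3) (j m k : ℕ) : xvcz i j m k ∈ span ℂ (Set.range famA) :=
    subset_span ⟨(⟨i, hi⟩, j, m, k), rfl⟩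
  rcases lt_or_ge i 3 with hi3 | hi3
  · exact base hi3 j m k
  · obtain ⟨i, rfl⟩ := Nat.exists_eq_add_of_le' hi3
    rw [xvcz_add_three]
    exact sub_mem (nsmul_mem (base (by omega) _ _ _) 3) (nsmul_mem (base (by omega) _ _ _) 2)

open Submodule in
theorem xvcz_mem_span_famB {i k : ℕ} (hi : i ≤ 4) (hk : i = 0 ∨ 0 < k) (j m : ℕ) :
    xvcz i j m k ∈ span ℂ (Set.range famB) := by
  have base {i k : ℕ} (hi : i < 3) (hk : i = 0 ∨ 0 < k) (j m : ℕ) :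
      xvcz i j m k ∈ span ℂ (Set.range famB) := by
    refine subset_span ⟨(⟨i, hi⟩, j, m, if i = 0 then k else k - 1), ?_⟩
    simp only [famB, Function.comp_apply, zShift, famA, Fin.ext_iff, Fin.val_zero]
    congr 1
    split_ifs <;> omega
  rcases lt_or_ge i 3 with hi3 | hi3
  · exact base hi3 hk j m
  · obtain ⟨i, rfl⟩ := Nat.exists_eq_add_of_le' hi3
    rw [xvcz_add_three]
    exact sub_mem (nsmul_mem (base (by omega) (by omega) _ _) 3)
      (nsmul_mem (base (by omega) (by omega) _ _) 2)

theorem famA_mul_mem_span (p q : Exponent) :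
    famA p * famA q ∈ Submodule.span ℂ (Set.range famA) := by
  rw [famA, famA, xvcz_mul]
  exact xvcz_mem_span_famA (by omega) _ _ _

theorem famB_mul_mem_span (p q : Exponent) :
    famB p * famB q ∈ Submodule.span ℂ (Set.range famB) := by
  obtain ⟨i, j, m, k⟩ := p
  obtain ⟨i', j', m', k'⟩ := q
  simp only [famB, Function.comp_apply, zShift, famA, xvcz_mul]
  refine xvcz_mem_span_famB (by omega) ?_ _ _
  by_cases hi : i = 0 <;> by_cases hi' : i' = 0 <;> simp [hi, hi']

theorem span_famA : Submodule.span ℂ (Set.range famA) = ⊤ := by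
  have hmem {i : ℕ} (hi : i ≤ 4) (j m k : ℕ) := xvcz_mem_span_famA hi j m k
  have hX : Set.range X ⊆
      (Submodule.span ℂ (Set.range famA) : Set (MvPolynomial (Fin 3) ℂ)) := by
    rintro _ ⟨a, rfl⟩
    fin_cases a
    · simpa [xvcz, xP] using hmem (i := 1) (by omega) 0 0 0
    · change yP ∈ Submodule.span ℂ (Set.range famA)
      rw [← Submodule.smul_mem_iff _ (by norm_num : (48 : ℂ) ≠ 0), ← mul_one yP,
        ← pow_zero zP, smul_yP_mul_zP_pow]
      exact sub_mem (hmem (by omega) _ _ _) (hmem (by omega) _ _ _)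
    · simpa [xvcz, zP] using hmem (i := 0) (by omega) 0 0 1
  have h1 : (1 : MvPolynomial (Fin 3) ℂ) ∈ Submodule.span ℂ (Set.range famA) := by
    simpa [xvcz] using hmem (i := 0) (by omega) 0 0 0
  rw [eq_top_iff, ← Algebra.top_toSubmodule, ← adjoin_range_X]
  exact Algebra.adjoin_le_span_range_of_mul_mem hX h1 famA_mul_mem_span

theorem famB_mem_B (p : Exponent) : famB p ∈ B := by
  obtain ⟨i, j, m, k⟩ := p
  have hv : vP ∈ B := Algebra.subset_adjoin (by simp [vP])
  have hc : cP ∈ B := Algebra.subset_adjoin (by simp [cP])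
  have hz : zP ∈ B := Algebra.subset_adjoin (by simp)
  have hyz : yP * zP ∈ B := Algebra.subset_adjoin (by simp)
  have hxz : xvcz 1 0 0 1 ∈ B := by
    simpa [xvcz] using (show xP * zP ∈ B from Algebra.subset_adjoin (by simp))
  have hx2z : xvcz 2 0 0 1 ∈ B := by
    rw [eq_add_of_sub_eq' (smul_yP_mul_zP_pow 1).symm]
    exact add_mem (by simpa [xvcz] using mul_mem hv hz)
      (B.smul_mem (by simpa using hyz) 48)
  have hvcz : xvcz 0 j m k ∈ B := by
    simpa [xvcz] using mul_mem (mul_mem (pow_mem hv j) (pow_mem hc m)) (pow_mem hz k)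
  fin_cases i
  · simpa [famB, famA, zShift] using hvcz
  · simpa [famB, famA, zShift, xvcz_mul, add_comm] using mul_mem hxz hvcz
  · simpa [famB, famA, zShift, xvcz_mul, add_comm] using mul_mem hx2z hvcz

theorem span_famB : Submodule.span ℂ (Set.range famB) = Subalgebra.toSubmodule B := by
  refine le_antisymm (Submodule.span_le.2 ?_) ?_
  · rintro _ ⟨p, rfl⟩
    exact famB_mem_B p
  have hmem {i k : ℕ} (hi : i ≤ 4) (hk : i = 0 ∨ 0 < k) (j m : ℕ) :=
    xvcz_mem_span_famB hi hk j m
  have hgen : {xP ^ 2 - 48 * yP, xP ^ 3 - 72 * xP * yP, zP, xP * zP, yP * zP} ⊆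
      (Submodule.span ℂ (Set.range famB) : Set (MvPolynomial (Fin 3) ℂ)) := by
    simp only [Set.insert_subset_iff, Set.singleton_subset_iff, SetLike.mem_coe]
    refine ⟨?_, ?_, ?_, ?_, ?_⟩
    · simpa [xvcz, vP] using hmem (i := 0) (k := 0) (by omega) (by omega) 1 0
    · simpa [xvcz, cP] using hmem (i := 0) (k := 0) (by omega) (by omega) 0 1
    · simpa [xvcz] using hmem (i := 0) (k := 1) (by omega) (by omega) 0 0
    · simpa [xvcz] using hmem (i := 1) (k := 1) (by omega) (by omega) 0 0
    · rw [← Submodule.smul_mem_iff _ (by norm_num : (48 : ℂ) ≠ 0), ← pow_one zP,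
        smul_yP_mul_zP_pow]
      exact sub_mem (hmem (by omega) (by omega) _ _) (hmem (by omega) (by omega) _ _)
  have h1 : (1 : MvPolynomial (Fin 3) ℂ) ∈ Submodule.span ℂ (Set.range famB) := by
    simpa [xvcz] using hmem (i := 0) (k := 0) (by omega) (by omega) 0 0
  exact Algebra.adjoin_le_span_range_of_mul_mem hgen h1 famB_mul_mem_span

instance (n : ℕ) : Finite (vczDeg ⁻¹' {n}) :=
  have := finite_fiber_mul_left 4
  have := finite_fiber_mul_left 6
  have := finite_fiber_add (6 * ·) (6 * ·)
  finite_fiber_add (4 * ·) (fun t : ℕ × ℕ => 6 * t.1 + 6 * t.2) n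

instance (n : ℕ) : Finite (degA ⁻¹' {n}) :=
  finite_fiber_add (fun i : Fin 3 => 2 * (i : ℕ)) vczDeg n

instance (n : ℕ) : Finite (degB ⁻¹' {n}) :=
  finite_fiber_add (![0, 8, 10] : Fin 3 → ℕ) vczDeg n

theorem cardSeries_vczDeg_mul :
    cardSeries vczDeg * ((1 - PowerSeries.X ^ 4) * (1 - PowerSeries.X ^ 6) ^ 2) = 1 := by
  have h4 := cardSeries_mul_left_mul_one_sub 4
  have h6 := cardSeries_mul_left_mul_one_sub 6
  have := finite_fiber_mul_left 4
  have := finite_fiber_mul_left 6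
  have := finite_fiber_add (6 * ·) (6 * ·)
  rw [show cardSeries vczDeg = _ from
      cardSeries_prod (4 * ·) (fun t : ℕ × ℕ => 6 * t.1 + 6 * t.2),
    cardSeries_prod (6 * ·) (6 * ·)]
  linear_combination (cardSeries (6 * ·) * (1 - PowerSeries.X ^ 6)) ^ 2 * h4 +
    (cardSeries (6 * ·) * (1 - PowerSeries.X ^ 6) + 1) * h6

theorem cardSeries_degA :
    cardSeries degA = (1 + PowerSeries.X ^ 2 + PowerSeries.X ^ 4) * cardSeries vczDeg := by
  rw [← show cardSeries (fun i : Fin 3 => 2 * (i : ℕ)) =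
      1 + PowerSeries.X ^ 2 + PowerSeries.X ^ 4 by simp [cardSeries_fintype, Fin.sum_univ_three]]
  exact cardSeries_prod (fun i : Fin 3 => 2 * (i : ℕ)) vczDeg

theorem cardSeries_degB :
    cardSeries degB = (1 + PowerSeries.X ^ 8 + PowerSeries.X ^ 10) * cardSeries vczDeg := by
  rw [← show cardSeries (![0, 8, 10] : Fin 3 → ℕ) =
      1 + PowerSeries.X ^ 8 + PowerSeries.X ^ 10 by simp [cardSeries_fintype, Fin.sum_univ_three]]
  exact cardSeries_prod (![0, 8, 10] : Fin 3 → ℕ) vczDeg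

theorem cardSeries_weight_wts_mul :
    cardSeries (fun d : Fin 3 →₀ ℕ => Finsupp.weight wts d) *
      ((1 - PowerSeries.X ^ 2) * (1 - PowerSeries.X ^ 4) * (1 - PowerSeries.X ^ 6)) = 1 := by
  let e : (Fin 3 →₀ ℕ) ≃ ℕ × ℕ × ℕ :=
    { toFun d := (d 0, d 1, d 2)
      invFun t := Finsupp.equivFunOnFinite.symm ![t.1, t.2.1, t.2.2]
      left_inv d := by ext i; fin_cases i <;> rfl
      right_inv t := rfl }
  have he (d : Fin 3 →₀ ℕ) :
      2 * (e d).1 + (4 * (e d).2.1 + 6 * (e d).2.2) = Finsupp.weight wts d := by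
    change 2 * d 0 + (4 * d 1 + 6 * d 2) = _
    simp [Finsupp.weight_eq_sum, Fin.sum_univ_three, wts]
    ring
  have h2 := cardSeries_mul_left_mul_one_sub 2
  have h4 := cardSeries_mul_left_mul_one_sub 4
  have h6 := cardSeries_mul_left_mul_one_sub 6
  have := finite_fiber_mul_left 2
  have := finite_fiber_mul_left 4
  have := finite_fiber_mul_left 6
  have := finite_fiber_add (4 * ·) (6 * ·)
  rw [← cardSeries_congr (dβ := fun t : ℕ × ℕ × ℕ => 2 * t.1 + (4 * t.2.1 + 6 * t.2.2)) e he,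
    cardSeries_prod (2 * ·) (fun t : ℕ × ℕ => 4 * t.1 + 6 * t.2),
    cardSeries_prod (4 * ·) (6 * ·)]
  linear_combination (cardSeries (4 * ·) * (1 - PowerSeries.X ^ 4)) *
      (cardSeries (6 * ·) * (1 - PowerSeries.X ^ 6)) * h2 +
    (cardSeries (6 * ·) * (1 - PowerSeries.X ^ 6)) * h4 + h6

theorem card_fiber_degA (n : ℕ) :
    Nat.card (degA ⁻¹' {n}) = Nat.card {d : Fin 3 →₀ ℕ | Finsupp.weight wts d = n} := by
  have hA : cardSeries degA *
      ((1 - PowerSeries.X ^ 2) * (1 - PowerSeries.X ^ 4) * (1 - PowerSeries.X ^ 6)) = 1 := by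
    rw [cardSeries_degA]
    linear_combination cardSeries_vczDeg_mul
  have := congrArg (PowerSeries.coeff n)
    (left_inv_eq_right_inv hA ((mul_comm _ _).trans cardSeries_weight_wts_mul))
  simp only [cardSeries, PowerSeries.coeff_mk] at this
  exact_mod_cast this

theorem finrank_Bk (n : ℕ) : Module.finrank ℂ (Bk n) = Nat.card (degB ⁻¹' {n}) := by
  have hA := linearIndependent_fiber_of_span_eq_top isWeightedHomogeneous_famA n span_famA
    (card_fiber_degA n)
  have hB : LinearIndependent ℂ fun p : degB ⁻¹' {n} => famB p :=
    hA.comp (fun p : degB ⁻¹' {n} => ⟨zShift p, (degA_zShift p).trans p.2⟩)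
      fun p q h => Subtype.ext (zShift_injective (congrArg Subtype.val h))
  rw [Bk, ← span_famB]
  exact finrank_span_range_inf_weightedHomogeneousSubmodule isWeightedHomogeneous_famB n hB

/-- The Hilbert series of `B` equals `(1 + t⁸ + t¹⁰)/((1−t⁴)(1−t⁶)²)`:
equivalently, multiplied by the denominator it equals the numerator, in `ℤ[[t]]`. -/
theorem hilbert_series_B :
    (PowerSeries.mk fun k => (Module.finrank ℂ (Bk k) : ℤ))
        * ((1 - (PowerSeries.X : PowerSeries ℤ) ^ 4) * (1 - PowerSeries.X ^ 6) ^ 2)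
      = 1 + PowerSeries.X ^ 8 + PowerSeries.X ^ 10 := by
  have hB : (PowerSeries.mk fun k => (Module.finrank ℂ (Bk k) : ℤ)) = cardSeries degB := by
    ext n
    simp [cardSeries, finrank_Bk]
  rw [hB, cardSeries_degB]
  linear_combination (1 + PowerSeries.X ^ 8 + PowerSeries.X ^ 10) * cardSeries_vczDeg_mul
end

section
/- Let λ = 1 − 1/√8 ∈ ℚ(√2) and λ' = 1 + 1/√8. The matrix R = [[0,0,2,1],[0,0,1,4/7],[−4,7,0,0],[7,−14,0,0]] lies in the paramodular group K(7), and for all τ₁, τ₂ in the upper half-plane, R maps [[λτ₁+λ'τ₂, (τ₁+τ₂)/2],[(τ₁+τ₂)/2, (2/7)λ'τ₁+(2/7)λτ₂]] ∈ ℍ₂ to [[−λτ₁⁻¹−λ'τ₂⁻¹, −(τ₁⁻¹+τ₂⁻¹)/2],[−(τ₁⁻¹+τ₂⁻¹)/2, −(2/7)λ'τ₁⁻¹−(2/7)λτ₂⁻¹]]. -/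
open Matrix Real

/-- `σ₇ = diag(1,1,1,7)`. -/
def sigma7 : Matrix (Fin 4) (Fin 4) ℚ :=
  !![1,0,0,0; 0,1,0,0; 0,0,1,0; 0,0,0,7]

/-- Membership in the paramodular group `K(7)`. -/
def memK7 (M : Matrix (Fin 4) (Fin 4) ℚ) : Prop :=
  Mᵀ * Jmat * M = Jmat ∧ ∀ i j, ∃ z : ℤ, (sigma7⁻¹ * M * sigma7) i j = (z : ℚ)

/-- The matrix `R = [[0,0,2,1],[0,0,1,4/7],[−4,7,0,0],[7,−14,0,0]]`. -/
def Rmat : Matrix (Fin 4) (Fin 4) ℚ :=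
  !![0,0,2,1; 0,0,1,4/7; -4,7,0,0; 7,-14,0,0]

noncomputable def lam : ℝ := 1 - 1 / Real.sqrt 8
noncomputable def lam' : ℝ := 1 + 1 / Real.sqrt 8

/-- The point `[[λτ₁+λ'τ₂, (τ₁+τ₂)/2],[(τ₁+τ₂)/2, (2/7)λ'τ₁+(2/7)λτ₂]]` of `ℍ₂`. -/
noncomputable def pt (τ₁ τ₂ : ℂ) : Matrix (Fin 2) (Fin 2) ℂ :=
  !![(lam : ℂ) * τ₁ + (lam' : ℂ) * τ₂, (τ₁ + τ₂) / 2;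
     (τ₁ + τ₂) / 2, (2 / 7) * (lam' : ℂ) * τ₁ + (2 / 7) * (lam : ℂ) * τ₂]


/-! The point is `τ₁ • P₁ + τ₂ • P₂` with `P₁ = ptComponent λ λ'` and `P₂ = ptComponent λ' λ`.
Since `λ` and `λ'` are the roots of `x² - 2x + 7/8`, these satisfy `Pᵢ C Pⱼ = -δᵢⱼ Pᵢ` and
`P₁ + P₂ = B`, so expanding gives `pt(-τ⁻¹) C pt(τ) = B`; as `B` is invertible, this is the claimed
action `B (C pt(τ))⁻¹ = pt(-τ⁻¹)`. For membership in `K(7)`: `R = [[0, B], [C, 0]]` with `BC = -1`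
is symplectic, and conjugating by `σ₇` divides the last row by 7 and multiplies the last column
by 7, which yields an integer matrix. -/

namespace Matrix

variable {n K : Type*} [Fintype n] [DecidableEq n] [CommRing K]

theorem mul_nonsing_inv_eq_of_eq_mul {B W M : Matrix n n K} (hB : IsUnit B.det)
    (h : B = W * M) : B * M⁻¹ = W := by
  rw [inv_eq_left_inv (B := B⁻¹ * W) (by rw [mul_assoc, ← h, nonsing_inv_mul _ hB]),
    mul_nonsing_inv_cancel_left _ _ hB]

theorem nonsing_inv_mul_mul_eq_of_mul_eq {σ M N : Matrix n n K} (hσ : IsUnit σ.det)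
    (h : σ * N = M * σ) : σ⁻¹ * M * σ = N := by
  rw [mul_assoc, ← h, nonsing_inv_mul_cancel_left _ _ hσ]

end Matrix

theorem neg_inv_smul_add_mul_mul_smul_add {K A : Type*} [Field K] [Ring A] [Algebra K A]
    {p₁ p₂ c : A} {t₁ t₂ : K} (h₁ : t₁ ≠ 0) (h₂ : t₂ ≠ 0)
    (h₁₁ : p₁ * c * p₁ = -p₁) (h₂₂ : p₂ * c * p₂ = -p₂)
    (h₁₂ : p₁ * c * p₂ = 0) (h₂₁ : p₂ * c * p₁ = 0) :
    (-t₁⁻¹ • p₁ + -t₂⁻¹ • p₂) * c * (t₁ • p₁ + t₂ • p₂) = p₁ + p₂ := by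
  simp only [add_mul, mul_add, smul_mul_assoc, mul_smul_comm, h₁₁, h₂₂, h₁₂, h₂₁]
  match_scalars <;> field_simp

def ptComponent {K : Type*} [Field K] (a b : K) : Matrix (Fin 2) (Fin 2) K :=
  !![a, 1 / 2; 1 / 2, 2 / 7 * b]

section ptComponent

variable {K : Type*} [Field K] [CharZero K] {a b : K}

theorem ptComponent_add_ptComponent (hsum : a + b = 2) :
    ptComponent a b + ptComponent b a = !![2, 1; 1, 4 / 7] := by
  ext i j; fin_cases i <;> fin_cases j <;> simp [ptComponent] <;> grind

theorem ptComponent_mul_mul_self (hsum : a + b = 2) (hprod : a * b = 7 / 8) :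
    ptComponent a b * !![-4, 7; 7, -14] * ptComponent a b = -ptComponent a b := by
  ext i j; fin_cases i <;> fin_cases j <;> simp [ptComponent] <;> grind

theorem ptComponent_mul_mul_swap (hsum : a + b = 2) (hprod : a * b = 7 / 8) :
    ptComponent a b * !![-4, 7; 7, -14] * ptComponent b a = 0 := by
  ext i j; fin_cases i <;> fin_cases j <;> simp [ptComponent] <;> grind

end ptComponent

theorem lam_add_lam' : lam + lam' = 2 := by
  rw [lam, lam']; ring

theorem lam_mul_lam' : lam * lam' = 7 / 8 := by
  have h : (1 / √8) ^ 2 = 1 / 8 := by rw [div_pow, sq_sqrt (by norm_num)]; norm_num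
  rw [lam, lam']; linear_combination -h

theorem pt_eq_smul_add_smul (τ₁ τ₂ : ℂ) :
    pt τ₁ τ₂ = τ₁ • ptComponent (lam : ℂ) lam' + τ₂ • ptComponent (lam' : ℂ) lam := by
  ext i j; fin_cases i <;> fin_cases j <;> simp [pt, ptComponent] <;> ring

theorem pt_neg_inv_mul_mul_pt {τ₁ τ₂ : ℂ} (h₁ : τ₁ ≠ 0) (h₂ : τ₂ ≠ 0) :
    pt (-τ₁⁻¹) (-τ₂⁻¹) * !![-4, 7; 7, -14] * pt τ₁ τ₂ = !![2, 1; 1, 4 / 7] := by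
  have hsum : (lam : ℂ) + lam' = 2 := by exact_mod_cast lam_add_lam'
  have hprod : (lam : ℂ) * lam' = 7 / 8 := by
    rw [← Complex.ofReal_mul, lam_mul_lam']; norm_num
  have hsum' : (lam' : ℂ) + lam = 2 := by rw [add_comm, hsum]
  have hprod' : (lam' : ℂ) * lam = 7 / 8 := by rw [mul_comm, hprod]
  rw [pt_eq_smul_add_smul, pt_eq_smul_add_smul, ← ptComponent_add_ptComponent hsum,
    neg_inv_smul_add_mul_mul_smul_add h₁ h₂
      (ptComponent_mul_mul_self hsum hprod) (ptComponent_mul_mul_self hsum' hprod')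
      (ptComponent_mul_mul_swap hsum hprod) (ptComponent_mul_mul_swap hsum' hprod')]

theorem Rmat_transpose_mul_Jmat_mul_Rmat : Rmatᵀ * Jmat * Rmat = Jmat := by
  ext i j
  fin_cases i <;> fin_cases j <;>
    simp [Rmat, Jmat, Matrix.mul_apply, Fin.sum_univ_four, Matrix.cons_val] <;> norm_num

def sigma7ConjRmat : Matrix (Fin 4) (Fin 4) ℤ :=
  !![0,0,2,7; 0,0,1,4; -4,7,0,0; 1,-2,0,0]

theorem sigma7_det : sigma7.det = 7 := by
  simp [Matrix.det_succ_row_zero, Fin.sum_univ_succ, sigma7]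

theorem sigma7_mul_sigma7ConjRmat : sigma7 * sigma7ConjRmat.map (↑) = Rmat * sigma7 := by
  ext i j
  fin_cases i <;> fin_cases j <;>
    simp [Rmat, sigma7, sigma7ConjRmat, Matrix.mul_apply, Fin.sum_univ_four, Matrix.cons_val]
  all_goals norm_num

theorem memK7_Rmat : memK7 Rmat := by
  have hσ : sigma7⁻¹ * Rmat * sigma7 = sigma7ConjRmat.map (↑) :=
    Matrix.nonsing_inv_mul_mul_eq_of_mul_eq (by simp [sigma7_det]) sigma7_mul_sigma7ConjRmat
  exact ⟨Rmat_transpose_mul_Jmat_mul_Rmat,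
    fun i j => ⟨sigma7ConjRmat i j, by rw [hσ, Matrix.map_apply]⟩⟩

theorem R_in_K7_and_action :
    memK7 Rmat ∧
    ∀ τ₁ τ₂ : ℂ, 0 < τ₁.im → 0 < τ₂.im →
      let A : Matrix (Fin 2) (Fin 2) ℂ := !![0, 0; 0, 0]
      let B : Matrix (Fin 2) (Fin 2) ℂ := !![2, 1; 1, 4/7]
      let C : Matrix (Fin 2) (Fin 2) ℂ := !![-4, 7; 7, -14]
      let D : Matrix (Fin 2) (Fin 2) ℂ := !![0, 0; 0, 0]
      (A * pt τ₁ τ₂ + B) * (C * pt τ₁ τ₂ + D)⁻¹ = pt (-τ₁⁻¹) (-τ₂⁻¹) := by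
  refine ⟨memK7_Rmat, fun τ₁ τ₂ h₁ h₂ => ?_⟩
  have hzero : (!![0, 0; 0, 0] : Matrix (Fin 2) (Fin 2) ℂ) = 0 := Matrix.etaExpand_eq 0
  simp only [hzero, zero_mul, zero_add, add_zero]
  refine Matrix.mul_nonsing_inv_eq_of_eq_mul (by norm_num [Matrix.det_fin_two_of]) ?_
  rw [← mul_assoc, pt_neg_inv_mul_mul_pt (ne_of_apply_ne Complex.im h₁.ne')
    (ne_of_apply_ne Complex.im h₂.ne')]
end

section
/- Let N be an odd positive integer and (M₁, M₂) ∈ SL₂(ℤ)×SL₂(ℤ) with M₁ ≡ M₂ (mod 2). Then for all τ₁, τ₂ in the upper half-plane, Φ₄(M₁,M₂) · [[2τ₁, τ₁],[τ₁, τ₁/2 + τ₂/(2N)]] = [[2(M₁·τ₁), M₁·τ₁],[M₁·τ₁, (1/2)(M₁·τ₁) + (1/(2N))(M₂·τ₂)]], where Φ₄(M₁,M₂) is the 4×4 matrix [[a₁, 0, 2b₁, b₁], [(a₁−a₂)/2, a₂, b₁, (b₂+Nb₁)/(2N)], [(c₁+Nc₂)/2, −Nc₂, d₁, (d₁−d₂)/2],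 [−Nc₂, 2Nc₂, 0, d₂]] and Mᵢ·τ = (aᵢτ+bᵢ)/(cᵢτ+dᵢ). -/
open Matrix

lemma denom_ne (M : Matrix (Fin 2) (Fin 2) ℤ) (h : M.det = 1) (τ : ℂ) (hτ : 0 < τ.im) :
    (M 1 0 : ℂ) * τ + (M 1 1 : ℂ) ≠ 0 := by
  intro h0
  have him : (M 1 0 : ℝ) * τ.im = 0 := by
    have := congrArg Complex.im h0
    simpa using this
  have hc : (M 1 0 : ℝ) = 0 := by
    rcases mul_eq_zero.mp him with h | h
    · exact h
    · exact absurd h (ne_of_gt hτ)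
  have hc' : M 1 0 = 0 := by exact_mod_cast hc
  have hd : (M 1 1 : ℂ) = 0 := by
    rw [hc'] at h0; simpa using h0
  have hd' : M 1 1 = 0 := by exact_mod_cast hd
  rw [Matrix.det_fin_two, hc', hd'] at h
  simp at h

theorem Phi4_action_on_H4 (N : ℕ) (hN : Odd N) (hNpos : 0 < N)
    (M₁ M₂ : Matrix (Fin 2) (Fin 2) ℤ)
    (h₁ : M₁.det = 1) (h₂ : M₂.det = 1)
    (hcong : ∀ i j, M₁ i j ≡ M₂ i j [ZMOD 2])
    (τ₁ τ₂ : ℂ) (hτ₁ : 0 < τ₁.im) (hτ₂ : 0 < τ₂.im) :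
    -- blocks of Φ₄(M₁,M₂), as complex matrices
    let a₁ : ℂ := M₁ 0 0; let b₁ : ℂ := M₁ 0 1; let c₁ : ℂ := M₁ 1 0; let d₁ : ℂ := M₁ 1 1
    let a₂ : ℂ := M₂ 0 0; let b₂ : ℂ := M₂ 0 1; let c₂ : ℂ := M₂ 1 0; let d₂ : ℂ := M₂ 1 1
    let A : Matrix (Fin 2) (Fin 2) ℂ := !![a₁, 0; (a₁ - a₂) / 2, a₂]
    let B : Matrix (Fin 2) (Fin 2) ℂ := !![2 * b₁, b₁; b₁, (b₂ + N * b₁) / (2 * N)]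
    let C : Matrix (Fin 2) (Fin 2) ℂ := !![(c₁ + N * c₂) / 2, -(N : ℂ) * c₂; -(N : ℂ) * c₂, 2 * N * c₂]
    let D : Matrix (Fin 2) (Fin 2) ℂ := !![d₁, (d₁ - d₂) / 2; 0, d₂]
    -- the point of ℍ₂ and the Möbius images of τ₁, τ₂
    let X : Matrix (Fin 2) (Fin 2) ℂ := !![2 * τ₁, τ₁; τ₁, τ₁ / 2 + τ₂ / (2 * N)]
    let w₁ : ℂ := (a₁ * τ₁ + b₁) / (c₁ * τ₁ + d₁)
    let w₂ : ℂ := (a₂ * τ₂ + b₂) / (c₂ * τ₂ + d₂)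
    (A * X + B) * (C * X + D)⁻¹ =
      !![2 * w₁, w₁; w₁, (1 / 2) * w₁ + (1 / (2 * N)) * w₂] := by
  intro a₁ b₁ c₁ d₁ a₂ b₂ c₂ d₂ A B C D X w₁ w₂
  have hN0 : (N : ℂ) ≠ 0 := Nat.cast_ne_zero.mpr hNpos.ne'
  have hn : (N : ℂ) * (N : ℂ)⁻¹ = 1 := mul_inv_cancel₀ hN0
  have hs₁ : c₁ * τ₁ + d₁ ≠ 0 := denom_ne M₁ h₁ τ₁ hτ₁
  have hs₂ : c₂ * τ₂ + d₂ ≠ 0 := denom_ne M₂ h₂ τ₂ hτ₂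
  have hw₁ : w₁ * (c₁ * τ₁ + d₁) = a₁ * τ₁ + b₁ := div_mul_cancel₀ _ hs₁
  have hw₂ : w₂ * (c₂ * τ₂ + d₂) = a₂ * τ₂ + b₂ := div_mul_cancel₀ _ hs₂
  clear_value w₁ w₂
  have hE : C * X + D = !![c₁ * τ₁ + d₁, (c₁ * τ₁ + d₁) / 2 - (c₂ * τ₂ + d₂) / 2;
      0, c₂ * τ₂ + d₂] := by
    show C * X + D = _
    ext i j
    fin_cases i <;> fin_cases j <;>
      simp [C, D, X, Matrix.mul_apply, Fin.sum_univ_two]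
    · ring
    · linear_combination (-(c₂ * τ₂) / 2) * hn
    · ring
    · linear_combination (c₂ * τ₂) * hn
  have hdetE : (C * X + D).det ≠ 0 := by
    rw [hE, Matrix.det_fin_two_of]
    simpa using mul_ne_zero hs₁ hs₂
  have : Invertible (C * X + D) :=
    Matrix.invertibleOfIsUnitDet _ (isUnit_iff_ne_zero.mpr hdetE)
  rw [Matrix.mul_inv_eq_iff_eq_mul_of_invertible, hE]
  ext i j
  fin_cases i <;> fin_cases j <;>
    simp [A, B, X, Matrix.mul_apply, Fin.sum_univ_two]
  · linear_combination -2 * hw₁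
  · linear_combination -hw₁
  · linear_combination -hw₁
  · linear_combination -(1/2) * hw₁ - (1/2) * ((N : ℂ))⁻¹ * hw₂ + (b₁/2) * hn
end

section
/- The lattice Λ = {M ∈ J^⊥ : σ_N M σ_N ∈ ℤ^{4×4}} of antisymmetric 4×4 rational matrices orthogonal to J = [[0,0,1,0],[0,0,0,1],[−1,0,0,0],[0,−1,0,0]] with respect to the Pfaffian bilinear form, equipped with the quadratic form N·pf, is an even lattice of signature (3,2); here σ_N = diag(1,1,1,N). -/
open Matrix

/-- The Pfaffian quadratic form on 4×4 antisymmetric rational matrices. -/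
def pf (M : Matrix (Fin 4) (Fin 4) ℚ) : ℚ :=
  M 0 1 * M 2 3 - M 0 2 * M 1 3 + M 0 3 * M 1 2

/-- The symmetric bilinear form associated to the Pfaffian. -/
def pfBilin (M M' : Matrix (Fin 4) (Fin 4) ℚ) : ℚ :=
  pf (M + M') - pf M - pf M'

/-- The lattice `Λ = {M ∈ J^⊥ : σ_N M σ_N ∈ ℤ^{4×4}}` inside the antisymmetric
4×4 matrices orthogonal to `J` for the Pfaffian bilinear form. -/
def memLambda (N : ℕ) (M : Matrix (Fin 4) (Fin 4) ℚ) : Prop :=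
  Mᵀ = -M ∧ pfBilin M Jmat = 0 ∧
    ∀ i j, ∃ z : ℤ, (sigmaN N * M * sigmaN N) i j = (z : ℚ)

/-- Entries of the conjugated matrix. -/
lemma sigma_entries (N : ℕ) (M : Matrix (Fin 4) (Fin 4) ℚ) :
    (sigmaN N * M * sigmaN N) 0 1 = M 0 1 ∧
    (sigmaN N * M * sigmaN N) 0 2 = M 0 2 ∧
    (sigmaN N * M * sigmaN N) 0 3 = (N : ℚ) * M 0 3 ∧
    (sigmaN N * M * sigmaN N) 1 2 = M 1 2 ∧
    (sigmaN N * M * sigmaN N) 1 3 = (N : ℚ) * M 1 3 ∧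
    (sigmaN N * M * sigmaN N) 2 3 = (N : ℚ) * M 2 3 := by
  refine ⟨?_, ?_, ?_, ?_, ?_, ?_⟩ <;>
    simp [sigmaN, Matrix.mul_apply, Fin.sum_univ_four, vecMul, dotProduct,
      vecHead, vecTail] <;> ring

lemma lam_entries (N : ℕ) (M : Matrix (Fin 4) (Fin 4) ℚ)
    (h : ∀ i j, ∃ z : ℤ, (sigmaN N * M * sigmaN N) i j = (z : ℚ)) :
    ∃ a b c d e f : ℤ, M 0 1 = a ∧ M 0 2 = b ∧ (N : ℚ) * M 0 3 = c ∧
      M 1 2 = d ∧ (N : ℚ) * M 1 3 = e ∧ (N : ℚ) * M 2 3 = f := by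
  obtain ⟨se01, se02, se03, se12, se13, se23⟩ := sigma_entries N M
  obtain ⟨a, ha⟩ := h 0 1
  obtain ⟨b, hb⟩ := h 0 2
  obtain ⟨c, hc⟩ := h 0 3
  obtain ⟨d, hd⟩ := h 1 2
  obtain ⟨e, he⟩ := h 1 3
  obtain ⟨f, hf⟩ := h 2 3
  exact ⟨a, b, c, d, e, f, by rw [← se01, ha], by rw [← se02, hb],
    by rw [← se03, hc], by rw [← se12, hd], by rw [← se13, he], by rw [← se23, hf]⟩

/-- Orthogonal basis of `J^⊥ ∩ {antisymmetric}`. -/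
def eB : Fin 5 → Matrix (Fin 4) (Fin 4) ℚ :=
![!![0,1,0,0; -1,0,0,0; 0,0,0,1; 0,0,-1,0],
  !![0,0,1,0; 0,0,0,-1; -1,0,0,0; 0,1,0,0],
  !![0,0,0,1; 0,0,1,0; 0,-1,0,0; -1,0,0,0],
  !![0,1,0,0; -1,0,0,0; 0,0,0,-1; 0,0,1,0],
  !![0,0,0,1; 0,0,-1,0; 0,1,0,0; -1,0,0,0]]

set_option maxHeartbeats 1000000 in
lemma sum_eB (g : Fin 5 → ℚ) :
    ∑ i, g i • eB i =
      !![0, g 0 + g 3, g 1, g 2 + g 4;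
         -(g 0 + g 3), 0, g 2 - g 4, -g 1;
         -g 1, -(g 2 - g 4), 0, g 0 - g 3;
         -(g 2 + g 4), g 1, -(g 0 - g 3), 0] := by
  simp only [eB, Fin.sum_univ_five]
  norm_num [Matrix.smul_of, Matrix.smul_cons, smul_eq_mul, ← Matrix.of_add_of, Matrix.add_cons,
    Matrix.head_cons, Matrix.tail_cons]
  ext i j
  fin_cases i <;> fin_cases j <;> simp [vecHead, vecTail] <;> ring

set_option maxHeartbeats 2000000 in
theorem Lambda_even_signature_three_two (N : ℕ) (hN : 0 < N) :
    -- `(Λ, N·pf)` is an even lattice: the quadratic form is integer valued ...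
    (∀ M, memLambda N M → ∃ z : ℤ, (N : ℚ) * pf M = (z : ℚ)) ∧
    -- ... and the associated bilinear form is integral
    (∀ M M', memLambda N M → memLambda N M' →
      ∃ z : ℤ, (N : ℚ) * pfBilin M M' = (z : ℚ)) ∧
    -- signature (3,2): an orthogonal basis of the ambient 5-dimensional space
    -- `J^⊥ ∩ {antisymmetric}` on which `N·pf` is positive 3 times and negative twice
    (∃ e : Fin 5 → Matrix (Fin 4) (Fin 4) ℚ,
      (∀ i, (e i)ᵀ = -(e i) ∧ pfBilin (e i) Jmat = 0) ∧
      LinearIndependent ℚ e ∧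
      (∀ M : Matrix (Fin 4) (Fin 4) ℚ, Mᵀ = -M → pfBilin M Jmat = 0 →
        M ∈ Submodule.span ℚ (Set.range e)) ∧
      (∀ i j, i ≠ j → pfBilin (e i) (e j) = 0) ∧
      (∀ i : Fin 5, if (i : ℕ) < 3 then 0 < (N : ℚ) * pf (e i)
        else (N : ℚ) * pf (e i) < 0)) := by
  have hNQ : (0 : ℚ) < N := by exact_mod_cast hN
  refine ⟨?_, ?_, ?_⟩
  · -- integrality of the quadratic form
    rintro M ⟨-, -, h⟩
    obtain ⟨a, b, c, d, e, f, ha, hb, hc, hd, he, hf⟩ := lam_entries N M h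
    refine ⟨a * f - b * e + c * d, ?_⟩
    simp only [pf]
    push_cast
    linear_combination ((N : ℚ) * M 2 3) * ha + (a : ℚ) * hf -
      ((N : ℚ) * M 1 3) * hb - (b : ℚ) * he + (M 1 2) * hc + (c : ℚ) * hd
  · -- integrality of the bilinear form
    rintro M M' ⟨-, -, h⟩ ⟨-, -, h'⟩
    obtain ⟨a, b, c, d, e, f, ha, hb, hc, hd, he, hf⟩ := lam_entries N M h
    obtain ⟨a', b', c', d', e', f', ha', hb', hc', hd', he', hf'⟩ := lam_entries N M' h'
    refine ⟨a * f' + a' * f - b * e' - b' * e + c * d' + c' * d, ?_⟩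
    simp only [pfBilin, pf, Matrix.add_apply]
    push_cast
    linear_combination ((N : ℚ) * M' 2 3) * ha + (a : ℚ) * hf' +
      ((N : ℚ) * M 2 3) * ha' + (a' : ℚ) * hf -
      ((N : ℚ) * M' 1 3) * hb - (b : ℚ) * he' -
      ((N : ℚ) * M 1 3) * hb' - (b' : ℚ) * he +
      (M' 1 2) * hc + (c : ℚ) * hd' + (M 1 2) * hc' + (c' : ℚ) * hd
  · refine ⟨eB, ?_, ?_, ?_, ?_, ?_⟩
    · intro i
      fin_cases i <;> refine ⟨?_, ?_⟩ <;>
        first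
        | (ext i j; fin_cases i <;> fin_cases j <;> simp [eB, vecHead, vecTail])
        | simp [eB, pfBilin, pf, Jmat, Matrix.add_apply, vecHead, vecTail]
    · rw [Fintype.linearIndependent_iff]
      intro g hg
      rw [sum_eB] at hg
      have h01 := congrFun (congrFun hg 0) 1
      have h02 := congrFun (congrFun hg 0) 2
      have h03 := congrFun (congrFun hg 0) 3
      have h12 := congrFun (congrFun hg 1) 2
      have h23 := congrFun (congrFun hg 2) 3
      simp at h01 h02 h03 h12 h23
      intro i
      fin_cases i <;> simp <;> linarith
    · intro M hM hJ
      rw [Submodule.mem_span_range_iff_exists_fun ℚ]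
      have h10 : M 1 0 = -M 0 1 := by simpa using congrFun (congrFun hM 0) 1
      have h20 : M 2 0 = -M 0 2 := by simpa using congrFun (congrFun hM 0) 2
      have h30 : M 3 0 = -M 0 3 := by simpa using congrFun (congrFun hM 0) 3
      have h21 : M 2 1 = -M 1 2 := by simpa using congrFun (congrFun hM 1) 2
      have h31 : M 3 1 = -M 1 3 := by simpa using congrFun (congrFun hM 1) 3
      have h32 : M 3 2 = -M 2 3 := by simpa using congrFun (congrFun hM 2) 3
      have h00 : M 0 0 = 0 := by have := congrFun (congrFun hM 0) 0; simp at this; linarith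
      have h11 : M 1 1 = 0 := by have := congrFun (congrFun hM 1) 1; simp at this; linarith
      have h22 : M 2 2 = 0 := by have := congrFun (congrFun hM 2) 2; simp at this; linarith
      have h33 : M 3 3 = 0 := by have := congrFun (congrFun hM 3) 3; simp at this; linarith
      simp [pfBilin, pf, Jmat, Matrix.add_apply] at hJ
      have hbe : M 1 3 = -M 0 2 := by linear_combination -hJ
      refine ⟨![(M 0 1 + M 2 3)/2, M 0 2, (M 0 3 + M 1 2)/2,
        (M 0 1 - M 2 3)/2, (M 0 3 - M 1 2)/2], ?_⟩
      rw [sum_eB]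
      ext i j
      fin_cases i <;> fin_cases j <;>
        simp [h10, h20, h30, h21, h31, h32, h00, h11, h22, h33, hbe,
          vecHead, vecTail] <;> linarith
    · intro i j hij
      fin_cases i <;> fin_cases j <;>
        simp_all [eB, pfBilin, pf, Matrix.add_apply, vecHead, vecTail]
    · intro i
      fin_cases i <;> simp [eB, pf, vecHead, vecTail] <;> linarith
end
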